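/- arXiv:2210.13719 — 8 statements merged into one kernel-verified Lean document; each statement's English description precedes it below -/
import Mathlib

section
/- Let (X,d) be a compact metric space and F a set-valued map on X with F(X) = ⋃_{x∈X} F(x) = X. If the shift σ is topologically transitive on lim←F, then F is transitive. -/
open Set Metric

section Defs

variable {X : Type*} [MetricSpace X]

/-- A set-valued map: `F` assigns to each point a nonempty closed subset and
is upper semi-continuous. -/
def IsSetValuedMap (F : X → Set X) : Prop :=
  (∀ x, (F x).Nonempty) ∧ (∀ x, IsClosed (F x)) ∧
    ∀ x, ∀ V : Set X, IsOpen V → F x ⊆ V →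
      ∃ U : Set X, IsOpen U ∧ x ∈ U ∧ ∀ t ∈ U, F t ⊆ V

/-- Lower semi-continuity of a set-valued map. -/
def LowerSemiCont (F : X → Set X) : Prop :=
  ∀ x, ∀ y ∈ F x, ∀ V : Set X, IsOpen V → y ∈ V →
    ∃ U : Set X, IsOpen U ∧ x ∈ U ∧ ∀ t ∈ U, (F t ∩ V).Nonempty

/-- An orbit of the set-valued map `F`: `o (i+1) ∈ F (o i)` for all `i`. -/
def IsOrbit (F : X → Set X) (o : ℕ → X) : Prop := ∀ i, o (i + 1) ∈ F (o i)

/-- `P(F)`: the set of points having at least one periodic orbit. -/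
def periodicPts (F : X → Set X) : Set X :=
  {x | ∃ o : ℕ → X, o 0 = x ∧ IsOrbit F o ∧ ∃ m, 1 ≤ m ∧ ∀ i, o (i + m) = o i}

/-- The inverse set-valued map `F⁻¹(x) = {y : x ∈ F y}`. -/
def Finv (F : X → Set X) : X → Set X := fun x => {y | x ∈ F y}

/-- The iterates `F^n`, with `F^0 x = {x}` and `F^{n+1} x = ⋃_{y ∈ F^n x} F y`. -/
def svIter (F : X → Set X) : ℕ → X → Set X
  | 0, x => {x}
  | n + 1, x => ⋃ y ∈ svIter F n x, F y

/-- The inverse limit `lim← F = {(x_0,x_1,…) : x_i ∈ F (x_{i+1})}`. -/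
def invLimit (F : X → Set X) : Set (ℕ → X) := {x | ∀ i, x i ∈ F (x (i + 1))}

/-- The shift map `σ(x_0, x_1, …) = (x_1, x_2, …)`. -/
def shift (x : ℕ → X) : ℕ → X := fun i => x (i + 1)

/-- The metric `ρ(x,y) = Σ_i d(x_i,y_i)/2^i` on sequences. -/
noncomputable def rho (x y : ℕ → X) : ℝ := ∑' i, dist (x i) (y i) / 2 ^ i

/-- Topological transitivity for a set-valued map. -/
def SVTransitive (F : X → Set X) : Prop :=
  ∀ U V : Set X, IsOpen U → U.Nonempty → IsOpen V → V.Nonempty →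
    ∃ n, 1 ≤ n ∧ ∃ o : ℕ → X, IsOrbit F o ∧ o 0 ∈ U ∧ o n ∈ V

/-- Strong sensitivity with a given constant `δ`. -/
def StronglySensitiveWith (F : X → Set X) (δ : ℝ) : Prop :=
  0 < δ ∧ ∀ x : X, ∀ ε > 0, ∃ y : X, dist x y < ε ∧
    ∃ o : ℕ → X, o 0 = y ∧ IsOrbit F o ∧ ∃ n, 1 ≤ n ∧ δ < infDist (o n) (svIter F n x)

/-- Strong sensitivity: some `δ > 0` is a strongly sensitive constant. -/
def StronglySensitive (F : X → Set X) : Prop := ∃ δ, StronglySensitiveWith F δ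

/-- Sensitivity for a set-valued map. -/
def SVSensitive (F : X → Set X) : Prop :=
  ∃ δ > 0, ∀ ε > 0, ∀ o : ℕ → X, IsOrbit F o →
    ∃ o' : ℕ → X, IsOrbit F o' ∧ dist (o 0) (o' 0) < ε ∧ ∃ n, 1 ≤ n ∧ δ < dist (o n) (o' n)

/-- Topological transitivity of the shift `σ` on `lim← F` (relatively open sets). -/
def ShiftTransitive (F : X → Set X) : Prop :=
  ∀ U V : Set (ℕ → X), IsOpen U → IsOpen V →
    (U ∩ invLimit F).Nonempty → (V ∩ invLimit F).Nonempty →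
    ∃ n, 1 ≤ n ∧ ∃ x ∈ U ∩ invLimit F, shift^[n] x ∈ V ∩ invLimit F

/-- Sensitivity of the shift `σ` on `lim← F` with respect to the metric `ρ`. -/
def ShiftSensitive (F : X → Set X) : Prop :=
  ∃ δ > 0, ∀ x ∈ invLimit F, ∀ ε > 0, ∃ y ∈ invLimit F,
    rho x y < ε ∧ ∃ n, 1 ≤ n ∧ δ < rho (shift^[n] x) (shift^[n] y)

/-- The set of σ-periodic points of `lim← F`. -/
def shiftPerPts (F : X → Set X) : Set (ℕ → X) :=
  {z | z ∈ invLimit F ∧ ∃ n, 1 ≤ n ∧ shift^[n] z = z}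

end Defs

/-- if `F(X) = X` and the shift `σ` is topologically transitive on
`lim← F`, then `F` is transitive. -/
theorem stmt4 {X : Type*} [MetricSpace X] [CompactSpace X] (F : X → Set X)
    (hF : IsSetValuedMap F) (hsur : ⋃ x, F x = Set.univ)
    (htrans : ShiftTransitive F) :
    SVTransitive F := by
  intro U V hU hUne hV hVne
  classical
  -- forward selection
  choose e he using hF.1
  -- backward selection from surjectivity
  have hsur' : ∀ z : X, ∃ y, z ∈ F y := by
    intro z
    have : z ∈ ⋃ x, F x := by rw [hsur]; trivial
    simpa using this
  choose g hg using hsur'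
  -- a point of invLimit starting at any given point
  have hback : ∀ z : X, (fun i => g^[i] z) ∈ invLimit F := by
    intro z i
    simp only [Function.iterate_succ_apply']
    exact hg _
  obtain ⟨v, hv⟩ := hVne
  obtain ⟨u, hu⟩ := hUne
  have hcylV : IsOpen {x : ℕ → X | x 0 ∈ V} := hV.preimage (continuous_apply 0)
  have hcylU : IsOpen {x : ℕ → X | x 0 ∈ U} := hU.preimage (continuous_apply 0)
  obtain ⟨n, hn1, x, ⟨hx0, hxinv⟩, hxn⟩ :=
    htrans {x | x 0 ∈ V} {x | x 0 ∈ U} hcylV hcylU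
      ⟨fun i => g^[i] v, by simpa using hv, hback v⟩
      ⟨fun i => g^[i] u, by simpa using hu, hback u⟩
  have hshift : ∀ (m : ℕ) (y : ℕ → X) (i : ℕ), shift^[m] y i = y (i + m) := by
    intro m
    induction m with
    | zero => simp
    | succ k ih =>
      intro y i
      rw [Function.iterate_succ_apply, ih]
      simp only [shift]
      ring_nf
  have hxn0 : x n ∈ U := by
    have := hxn.1
    simpa [hshift] using this
  -- shift^[n] x evaluated at 0 is x n
  -- define the orbit: reverse x on [0, n], then extend with e
  set o : ℕ → X := fun i => Nat.rec (x n)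
    (fun i prev => if i + 1 ≤ n then x (n - (i + 1)) else e prev) i with ho
  have hoeq : ∀ i, i ≤ n → o i = x (n - i) := by
    intro i hi
    induction i with
    | zero => simp [ho]
    | succ k ih => simp only [ho, if_pos hi]
  have horb : IsOrbit F o := by
    intro i
    by_cases h : i + 1 ≤ n
    · have h1 : o (i + 1) = x (n - (i + 1)) := hoeq _ h
      have h2 : o i = x (n - i) := hoeq _ (Nat.le_of_succ_le h)
      rw [h1, h2]
      have := hxinv (n - (i + 1))
      have harith : n - (i + 1) + 1 = n - i := by omega
      rwa [harith] at this
    · show (if i + 1 ≤ n then x (n - (i + 1)) else e (o i)) ∈ F (o i)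
      rw [if_neg h]
      exact he _
  refine ⟨n, hn1, o, horb, ?_, ?_⟩
  · rw [show o 0 = x n from rfl]; exact hxn0
  · rw [hoeq n le_rfl]; simpa using hx0
end

section
/- Let X = {0,1} with metric d(0,1) = 1, and let F be the set-valued map F(0) = F(1) = {0,1}. Then the shift σ is sensitive on lim←F, but F is not strongly sensitive. -/
open Set Metric

/-- The two-point space `{0,1}` with the metric inherited from `ℝ`, so `d(0,1) = 1`. -/
abbrev TwoPt : Type := ({0, 1} : Set ℝ)

/-- The set-valued map `F 0 = F 1 = {0,1}`. -/
def F6 : TwoPt → Set TwoPt := fun _ => Set.univ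

noncomputable def flip6 (a : TwoPt) : TwoPt :=
  if a.1 = 0 then ⟨1, by simp⟩ else ⟨0, by simp⟩

lemma dist_flip6 (a : TwoPt) : dist a (flip6 a) = 1 := by
  obtain ⟨v, hv⟩ := a
  rcases hv with h | h <;> subst h <;>
    simp [flip6, Subtype.dist_eq, Real.dist_eq]

lemma shift_iterate (x : ℕ → TwoPt) (n i : ℕ) : shift^[n] x i = x (i + n) := by
  induction n generalizing x with
  | zero => rfl
  | succ n ih =>
    rw [Function.iterate_succ_apply, ih]
    simp [shift]
    ring_nf

lemma svIter_nonempty (n : ℕ) (x : TwoPt) : (svIter F6 n x).Nonempty := by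
  induction n with
  | zero => exact ⟨x, rfl⟩
  | succ n ih =>
    obtain ⟨z, hz⟩ := ih
    exact ⟨z, Set.mem_biUnion hz (by trivial)⟩

lemma svIter_univ (n : ℕ) (x : TwoPt) (hn : 1 ≤ n) : svIter F6 n x = Set.univ := by
  cases n with
  | zero => omega
  | succ m =>
    apply Set.eq_univ_of_forall
    intro z
    obtain ⟨w, hw⟩ := svIter_nonempty m x
    exact Set.mem_biUnion hw (by trivial)

lemma tsum_half_geom : ∑' i : ℕ, ((1:ℝ)/2) ^ i = 2 := by
  rw [tsum_geometric_of_lt_one (by norm_num) (by norm_num)]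
  norm_num

/-- the shift is sensitive on `lim← F6`, but `F6` is not strongly
sensitive. -/
theorem stmt6 : ShiftSensitive F6 ∧ ¬ StronglySensitive F6 := by
  constructor
  · refine ⟨1, one_pos, ?_⟩
    intro x _ ε hε
    obtain ⟨N, hN⟩ : ∃ N : ℕ, ((1:ℝ)/2) ^ N < ε / 2 :=
      exists_pow_lt_of_lt_one (by linarith) (by norm_num)
    set y : ℕ → TwoPt := fun i => if i < N then x i else flip6 (x i) with hy
    have hdist : ∀ i, dist (x i) (y i) = if i < N then 0 else 1 := by
      intro i
      by_cases h : i < N <;> simp [hy, h, dist_flip6]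
    refine ⟨y, fun i => trivial, ?_, N + 1, by omega, ?_⟩
    · have h1 : rho x y = ∑' i : ℕ, (if i < N then (0:ℝ) else (1/2) ^ i) := by
        unfold rho
        apply tsum_congr
        intro i
        rw [hdist]
        by_cases h : i < N <;> simp [h, div_pow]
      have hsumm : Summable (fun i : ℕ => if i < N then (0:ℝ) else (1/2) ^ i) := by
        apply Summable.of_nonneg_of_le (fun i => ?_) (fun i => ?_)
          (summable_geometric_of_lt_one (r := (1:ℝ)/2) (by norm_num) (by norm_num))
        · by_cases h : i < N <;> simp [h]
        · by_cases h : i < N <;> simp [h]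
      have h2 : ∑' i : ℕ, (if i < N then (0:ℝ) else (1/2) ^ i)
          = ∑' i : ℕ, ((1:ℝ)/2) ^ (i + N) := by
        rw [← Summable.sum_add_tsum_nat_add N hsumm]
        have : ∀ i ∈ Finset.range N, (if i < N then (0:ℝ) else (1/2) ^ i) = 0 := by
          intro i hi
          simp [Finset.mem_range.mp hi]
        rw [Finset.sum_congr rfl this]
        simp only [Finset.sum_const_zero, zero_add]
        apply tsum_congr
        intro i
        have : ¬ (i + N < N) := by omega
        simp [this]
      have h3 : ∑' i : ℕ, ((1:ℝ)/2) ^ (i + N) = 2 * ((1:ℝ)/2) ^ N := by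
        simp only [pow_add]
        rw [tsum_mul_right, tsum_half_geom]
      rw [h1, h2, h3]
      linarith
    · have h4 : rho (shift^[N+1] x) (shift^[N+1] y) = ∑' i : ℕ, ((1:ℝ)/2) ^ i := by
        unfold rho
        apply tsum_congr
        intro i
        rw [shift_iterate, shift_iterate, hdist]
        have : ¬ (i + (N + 1) < N) := by omega
        simp [this, div_pow]
      rw [h4, tsum_half_geom]
      norm_num
  · rintro ⟨δ, hδ, h⟩
    obtain ⟨y, -, o, -, -, n, hn, hlt⟩ := h ⟨0, by simp⟩ 1 one_pos
    rw [svIter_univ n _ hn] at hlt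
    rw [infDist_zero_of_mem (Set.mem_univ _)] at hlt
    linarith
end

section
/- Let X = [0,1] with the Euclidean metric and let F be the constant set-valued map F(x) = [0,1] for all x ∈ [0,1]. Then F is transitive and P(F) = X (so P(F) is dense in X), but F is not strongly sensitive. -/
open Set Metric

/-- The constant set-valued map `F x = [0,1]` on `[0,1]`. -/
def F9 : unitInterval → Set unitInterval := fun _ => Set.univ

/-- `F9` is transitive and `P(F9) = [0,1]` (hence dense), but `F9`
is not strongly sensitive. -/
theorem stmt9 : SVTransitive F9 ∧ periodicPts F9 = Set.univ ∧
    Dense (periodicPts F9) ∧ ¬ StronglySensitive F9 := by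
  have hper : periodicPts F9 = Set.univ := by
    ext x
    simp only [Set.mem_univ, iff_true, periodicPts, Set.mem_setOf_eq]
    exact ⟨fun _ => x, rfl, fun i => Set.mem_univ _, 1, le_refl 1, fun i => rfl⟩
  refine ⟨?_, hper, hper ▸ dense_univ, ?_⟩
  · intro U V _ hU _ hV
    obtain ⟨u, hu⟩ := hU
    obtain ⟨v, hv⟩ := hV
    exact ⟨1, le_refl 1, fun i => if i = 0 then u else v,
      fun i => Set.mem_univ _, by simpa using hu, by simpa using hv⟩
  · rintro ⟨δ, hδ, h⟩
    obtain ⟨y, -, o, -, -, n, hn, hlt⟩ := h 0 1 one_pos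
    have hiter : svIter F9 n 0 = Set.univ := by
      clear hlt
      obtain ⟨m, rfl⟩ := Nat.exists_eq_add_of_le hn
      clear hn
      induction m with
      | zero =>
        ext z
        simp only [svIter, Set.mem_univ, iff_true, Set.mem_iUnion]
        exact ⟨0, Set.mem_singleton _, Set.mem_univ z⟩
      | succ k ih =>
        show svIter F9 (1 + k + 1) 0 = Set.univ
        ext z
        simp only [svIter, Set.mem_univ, iff_true, Set.mem_iUnion]
        exact ⟨0, ih ▸ Set.mem_univ 0, Set.mem_univ z⟩
    rw [hiter] at hlt
    have : infDist (o n) (Set.univ : Set unitInterval) = 0 := by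
      rw [← @Metric.infDist_zero_of_mem _ _ Set.univ (o n) (Set.mem_univ _)]
    linarith [hlt, this ▸ hlt, hδ]
end

section
/- Let X = [0,∞) with the bounded metric d(x,y) = min(|x−y|, 1), and let F be the set-valued map F(x) = {2x, 3x}. Then F is sensitive. -/
open Set Metric

/-- The half-line `[0, ∞)`. -/
def HalfLine : Type := {x : ℝ // 0 ≤ x}

/-- The bounded metric `d(x,y) = min (|x - y|) 1` on the half-line. -/
noncomputable instance : MetricSpace HalfLine where
  dist x y := min |x.1 - y.1| 1
  dist_self x := by simp
  dist_comm x y := by simp [abs_sub_comm]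
  dist_triangle x y z := by
    show min |x.1 - z.1| 1 ≤ min |x.1 - y.1| 1 + min |y.1 - z.1| 1
    have habs : |x.1 - z.1| ≤ |x.1 - y.1| + |y.1 - z.1| := abs_sub_le _ _ _
    have n1 : (0:ℝ) ≤ min |x.1 - y.1| 1 := le_min (abs_nonneg _) zero_le_one
    have n2 : (0:ℝ) ≤ min |y.1 - z.1| 1 := le_min (abs_nonneg _) zero_le_one
    have l1 : min |x.1 - z.1| 1 ≤ 1 := min_le_right _ _
    have l2 : min |x.1 - z.1| 1 ≤ |x.1 - z.1| := min_le_left _ _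
    rcases le_total 1 |x.1 - y.1| with h | h
    · rw [min_eq_right h]; linarith
    · rcases le_total 1 |y.1 - z.1| with h' | h'
      · rw [min_eq_right h']; linarith
      · rw [min_eq_left h, min_eq_left h']; linarith
  eq_of_dist_eq_zero := by
    intro x y h
    have h' : min |x.1 - y.1| 1 = 0 := h
    rcases min_eq_iff.mp h' with ⟨h1, _⟩ | ⟨h1, _⟩
    · exact Subtype.ext (sub_eq_zero.mp (abs_eq_zero.mp h1))
    · norm_num at h1

/-- The set-valued map `F x = {2x, 3x}` on the half-line. -/
def F10 : HalfLine → Set HalfLine := fun x => {y | y.1 = 2 * x.1 ∨ y.1 = 3 * x.1}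

lemma halfline_dist (a b : HalfLine) : dist a b = min |a.1 - b.1| 1 := rfl

lemma orbit_step {o : ℕ → HalfLine} (ho : IsOrbit F10 o) (i : ℕ) :
    (o (i+1)).1 = 2 * (o i).1 ∨ (o (i+1)).1 = 3 * (o i).1 := ho i

lemma orbit_growth {o : ℕ → HalfLine} (ho : IsOrbit F10 o) (i : ℕ) :
    2 ^ i * (o 0).1 ≤ (o i).1 := by
  induction i with
  | zero => simp
  | succ n ih =>
    have hn : (0:ℝ) ≤ (o n).1 := (o n).2
    rcases orbit_step ho n with h | h <;> rw [h, pow_succ] <;> nlinarith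

/-- `F10` is sensitive. -/
theorem stmt10 : SVSensitive F10 := by
  refine ⟨1/4, by norm_num, ?_⟩
  intro ε hε o ho
  by_cases h0 : (o 0).1 = 0
  · -- the orbit stays at 0
    have hzero : ∀ i, (o i).1 = 0 := by
      intro i
      induction i with
      | zero => exact h0
      | succ n ih => rcases orbit_step ho n with h | h <;> rw [h, ih] <;> ring
    set y : ℝ := min ε 1 / 2 with hy
    have hy0 : 0 < y := by positivity
    have hy1 : y ≤ 1/2 := by
      have : min ε 1 ≤ 1 := min_le_right _ _
      simp only [hy]; linarith
    -- orbit doubling from y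
    refine ⟨fun i => ⟨2 ^ i * y, by positivity⟩, ?_, ?_, ?_⟩
    · intro i; left; show (2:ℝ) ^ (i+1) * y = 2 * (2 ^ i * y); ring
    · show min |(o 0).1 - 2 ^ 0 * y| 1 < ε
      simp only [h0]
      have : |(0:ℝ) - (2 ^ 0 * y)| = y := by
        rw [abs_sub_comm]; simp [abs_of_pos hy0]
      rw [this]
      have : min ε 1 ≤ ε := min_le_left _ _
      calc min y 1 ≤ y := min_le_left _ _
        _ < ε := by simp only [hy]; linarith
    · obtain ⟨n, hn⟩ := pow_unbounded_of_one_lt (1/y) (by norm_num : (1:ℝ) < 2)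
      refine ⟨n + 1, le_add_self, ?_⟩
      show 1/4 < min |(o (n+1)).1 - 2 ^ (n+1) * y| 1
      have h1 : (1:ℝ) < 2 ^ (n+1) * y := by
        have : (1:ℝ)/y < 2 ^ n := hn
        have h2 : (2:ℝ) ^ n ≤ 2 ^ (n+1) := by
          apply pow_le_pow_right₀ (by norm_num); omega
        have := (div_lt_iff₀ hy0).mp this
        nlinarith
      have : |(o (n+1)).1 - 2 ^ (n+1) * y| = 2 ^ (n+1) * y := by
        rw [hzero, abs_sub_comm]; simp; positivity
      rw [this, min_eq_right (le_of_lt h1)]; norm_num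
  · -- positive starting point: follow until big, then branch differently
    have hx0 : 0 < (o 0).1 := lt_of_le_of_ne (o 0).2 (Ne.symm h0)
    obtain ⟨m, hm⟩ := pow_unbounded_of_one_lt (1/(o 0).1) (by norm_num : (1:ℝ) < 2)
    have hom : 1 < (o m).1 := by
      have hg := orbit_growth ho m
      have := (div_lt_iff₀ hx0).mp hm
      nlinarith
    have hbr := orbit_step ho m
    have hcnn : 0 ≤ 5 * (o m).1 - (o (m+1)).1 := by
      rcases hbr with h | h <;> rw [h] <;> linarith
    set c : ℝ := 5 * (o m).1 - (o (m+1)).1 with hc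
    refine ⟨fun i => if i ≤ m then o i else @id HalfLine ⟨2 ^ (i - (m+1)) * c, by positivity⟩,
      ?_, ?_, ?_⟩
    · intro i
      rcases lt_trichotomy i m with h | h | h
      · have h1 : i ≤ m := le_of_lt h
        have h2 : i + 1 ≤ m := h
        simp only [if_pos h1, if_pos h2]
        exact ho i
      · subst h
        simp only [if_pos (le_refl i), if_neg (by omega : ¬ i + 1 ≤ i)]
        have : (i+1) - (i+1) = 0 := by omega
        rw [this]
        rcases hbr with h | h
        · right; show (2:ℝ) ^ 0 * c = 3 * (o i).1; rw [hc, h]; ring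
        · left; show (2:ℝ) ^ 0 * c = 2 * (o i).1; rw [hc, h]; ring
      · simp only [if_neg (by omega : ¬ i ≤ m), if_neg (by omega : ¬ i + 1 ≤ m)]
        left
        show (2:ℝ) ^ (i + 1 - (m+1)) * c = 2 * ((2:ℝ) ^ (i - (m+1)) * c)
        have : i + 1 - (m+1) = (i - (m+1)) + 1 := by omega
        rw [this, pow_succ]; ring
    · simp only [if_pos (Nat.zero_le m)]
      rw [halfline_dist]
      simpa using hε
    · refine ⟨m + 1, le_add_self, ?_⟩
      simp only [if_neg (by omega : ¬ m + 1 ≤ m)]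
      rw [halfline_dist]
      have hsimp : (m+1) - (m+1) = 0 := by omega
      rw [hsimp]
      have habs : |(o (m+1)).1 - 2 ^ 0 * c| = (o m).1 := by
        rcases hbr with h | h
        · rw [hc, h]
          have : |2 * (o m).1 - 2 ^ 0 * (5 * (o m).1 - 2 * (o m).1)| = |(-((o m).1))| := by
            ring_nf
          rw [this, abs_neg, abs_of_pos (by linarith)]
        · rw [hc, h]
          have : |3 * (o m).1 - 2 ^ 0 * (5 * (o m).1 - 3 * (o m).1)| = |(o m).1| := by
            ring_nf
          rw [this, abs_of_pos (by linarith)]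
      show 1/4 < min |(o (m+1)).1 - 2 ^ 0 * c| 1
      rw [habs, min_eq_right (le_of_lt hom)]; norm_num
end

section
/- Let X = [0,∞) with the bounded metric d(x,y) = min(|x−y|, 1), and let F be the set-valued map F(x) = {2x, 3x}. Then the shift σ is not sensitive on lim←F. -/
open Set Metric

/-! At the constant sequence `0`, every point of `lim← F10` within `ρ`-distance `ε` stays
`2ε`-close under every power of `σ`: since `x_{i+1} ≤ x_i` along any point of the inverse limit,
all its coordinates are as close to `0` as the first one, which `ρ` controls. -/

section InverseLimit

variable {X : Type*}

theorem shift_iterate_apply (x : ℕ → X) (n i : ℕ) : shift^[n] x i = x (i + n) := by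
  induction n generalizing x with
  | zero => rfl
  | succ n ih => rw [Function.iterate_succ_apply, ih]; rfl

variable [MetricSpace X]

theorem summable_dist_div_pow_of_le {x y : ℕ → X} {c : ℝ} (h : ∀ i, dist (x i) (y i) ≤ c) :
    Summable fun i => dist (x i) (y i) / 2 ^ i :=
  (summable_geometric_two.mul_left c).of_nonneg_of_le (fun _ => by positivity) fun i => by
    rw [div_eq_mul_inv, ← inv_pow, ← one_div]
    exact mul_le_mul_of_nonneg_right (h i) (by positivity)

theorem dist_zero_le_rho {x y : ℕ → X} {c : ℝ} (h : ∀ i, dist (x i) (y i) ≤ c) :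
    dist (x 0) (y 0) ≤ rho x y := by
  simpa [rho] using (summable_dist_div_pow_of_le h).le_tsum 0 fun _ _ => by positivity

theorem rho_le_two_mul {x y : ℕ → X} {c : ℝ} (h : ∀ i, dist (x i) (y i) ≤ c) :
    rho x y ≤ 2 * c := by
  calc rho x y ≤ ∑' i : ℕ, c * (1 / 2) ^ i :=
        (summable_dist_div_pow_of_le h).tsum_le_tsum
          (fun i => by
            rw [one_div_pow, mul_one_div]
            exact div_le_div_of_nonneg_right (h i) (by positivity))
          (summable_geometric_two.mul_left c)
    _ = 2 * c := by rw [tsum_mul_left, tsum_geometric_two, mul_comm]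

end InverseLimit

namespace HalfLine

def origin : HalfLine := ⟨0, le_rfl⟩

theorem dist_le_one (a b : HalfLine) : dist a b ≤ 1 := min_le_right _ _

theorem dist_origin (a : HalfLine) : dist origin a = min a.1 1 := by
  change min |0 - a.1| 1 = min a.1 1
  rw [zero_sub, abs_neg, abs_of_nonneg a.2]

end HalfLine

open HalfLine

theorem le_of_mem_F10 {a b : HalfLine} (h : b ∈ F10 a) : a.1 ≤ b.1 := by
  rcases h with h | h <;> linarith [a.2]

theorem const_origin_mem_invLimit_F10 : (fun _ => origin) ∈ invLimit F10 :=
  fun _ => Or.inl (by simp [origin])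

theorem antitone_of_mem_invLimit_F10 {y : ℕ → HalfLine} (hy : y ∈ invLimit F10) :
    Antitone fun i => (y i).1 :=
  antitone_nat_of_succ_le fun i => le_of_mem_F10 (hy i)

/-- the shift `σ` is not sensitive on `lim← F10`. -/
theorem stmt11 : ¬ ShiftSensitive F10 := by
  rintro ⟨δ, hδ, h⟩
  obtain ⟨y, hy, hρ, n, -, hfar⟩ :=
    h (fun _ => origin) const_origin_mem_invLimit_F10 (δ / 2) (half_pos hδ)
  have hclose : ∀ i, dist origin (y i) ≤ rho (fun _ => origin) y := fun i => by
    calc dist origin (y i) ≤ dist origin (y 0) := by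
          rw [dist_origin, dist_origin]
          exact min_le_min_right 1 (antitone_of_mem_invLimit_F10 hy (Nat.zero_le i))
      _ ≤ _ := dist_zero_le_rho (c := 1) fun _ => dist_le_one origin _
  have hshift := rho_le_two_mul (x := shift^[n] fun _ => origin) (y := shift^[n] y)
    fun i => by simpa only [shift_iterate_apply] using hclose (i + n)
  linarith
end

section
/- Let X = [0,1] with the Euclidean metric and let F be the set-valued map defined by F(x) = {x} for 0 ≤ x < 1/2, F(1/2) = [0,1], F(x) = {0, x, 1} for 1/2 < x < 1, and F(1) = [0,1]. Then F is not sensitive. -/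
open Set Metric

/-- The set-valued map on `[0,1]` with `F x = {x}` for `x < 1/2`, `F (1/2) = [0,1]`,
`F x = {0, x, 1}` for `1/2 < x < 1`, and `F 1 = [0,1]`. -/
noncomputable def exF : unitInterval → Set unitInterval := fun x =>
  if (x : ℝ) < 1 / 2 then {x}
  else if (x : ℝ) = 1 / 2 then Set.univ
  else if (x : ℝ) < 1 then {y | (y : ℝ) = 0 ∨ y = x ∨ (y : ℝ) = 1}
  else Set.univ

/-- `exF` is not sensitive. -/
theorem stmt15 : ¬ SVSensitive exF := by
  rintro ⟨δ, hδ, h⟩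
  have h0 : ((0 : unitInterval) : ℝ) < 1 / 2 := by norm_num
  have horb : IsOrbit exF (fun _ => (0 : unitInterval)) := by
    intro i
    simp only [exF, if_pos h0, Set.mem_singleton_iff]
  obtain ⟨o', horb', hd, n, hn, hgt⟩ :=
    h (min δ (1 / 2)) (by positivity) (fun _ => 0) horb
  have hlt : (o' 0 : ℝ) < 1 / 2 := by
    have h1 : dist (0 : unitInterval) (o' 0) < 1 / 2 :=
      lt_of_lt_of_le hd (min_le_right _ _)
    have h2 : dist (0 : unitInterval) (o' 0) = |(0 : ℝ) - (o' 0 : ℝ)| := rfl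
    have h3 := (o' 0).2.1
    rw [h2, abs_sub_comm, abs_of_nonneg (by linarith)] at h1
    linarith
  have hconst : ∀ i, o' i = o' 0 := by
    intro i
    induction i with
    | zero => rfl
    | succ k ih =>
      have := horb' k
      rw [ih] at this
      simpa only [exF, if_pos hlt, Set.mem_singleton_iff] using this
  have : δ < min δ (1 / 2) := by
    calc δ < dist ((fun _ => (0 : unitInterval)) n) (o' n) := hgt
    _ = dist (0 : unitInterval) (o' 0) := by rw [hconst n]
    _ < min δ (1 / 2) := hd
  exact absurd this (not_lt.mpr (min_le_left _ _))
end

section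
/- Let X = [0,1] with the Euclidean metric and let F be the set-valued map defined by F(x) = {x} for 0 ≤ x < 1/2, F(1/2) = [0,1], F(x) = {0, x, 1} for 1/2 < x < 1, and F(1) = [0,1]. Then the shift σ is sensitive on lim←F. -/
open Set Metric

/-!
Two distinct points `c₁ ≠ c₂` with `F cᵢ = X` already make `σ` sensitive on a bounded space. Given
`x ∈ lim← F`, keep `x₀, …, x_N` and continue with the constant sequence at whichever `cᵢ` is
farther from `x_{N+1}`; this stays in `lim← F` because `F cᵢ` contains everything. The new point
is `ρ`-close to `x` for large `N`, while after `N + 1` shifts their `0`-th coordinates are at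
least `d(c₁, c₂)/2` apart. For `exF` take `c₁ = 1/2` and `c₂ = 1`.
-/

section ShiftSensitivity

variable {X : Type*}

def constAfter (x : ℕ → X) (N : ℕ) (c : X) : ℕ → X := fun i => if i ≤ N then x i else c

theorem constAfter_mem_invLimit {F : X → Set X} {x : ℕ → X} (hx : x ∈ invLimit F) (N : ℕ)
    {c : X} (hc : F c = univ) : constAfter x N c ∈ invLimit F := by
  intro i
  by_cases hi : i + 1 ≤ N
  · simpa [constAfter, hi, show i ≤ N by omega] using hx i
  · simp [constAfter, hi, hc]

variable [MetricSpace X] [BoundedSpace X]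

theorem dist_le_diam_univ (a b : X) : dist a b ≤ diam (univ : Set X) :=
  dist_le_diam_of_mem (Bornology.isBounded_univ.mpr ‹_›) (mem_univ a) (mem_univ b)

theorem summable_dist_div_two_pow (x y : ℕ → X) :
    Summable fun i => dist (x i) (y i) / 2 ^ i := by
  refine Summable.of_nonneg_of_le (fun i => by positivity) (fun i => ?_)
    ((summable_geometric_two).mul_left (diam (univ : Set X)))
  rw [one_div_pow, ← div_eq_mul_one_div]
  gcongr
  exact dist_le_diam_univ _ _

theorem dist_le_rho (x y : ℕ → X) : dist (x 0) (y 0) ≤ rho x y := by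
  simpa [rho] using (summable_dist_div_two_pow x y).le_tsum 0 fun i _ => by positivity

theorem rho_le_of_forall_le_eq {x y : ℕ → X} {N : ℕ} (hxy : ∀ i ≤ N, x i = y i) :
    rho x y ≤ diam (univ : Set X) * (1 / 2) ^ N := by
  have hs := summable_dist_div_two_pow x y
  have hhead : ∑ i ∈ Finset.range (N + 1), dist (x i) (y i) / 2 ^ i = 0 := by
    refine Finset.sum_eq_zero fun i hi => ?_
    rw [hxy i (Finset.mem_range_succ_iff.mp hi), dist_self, zero_div]
  have htail : ∑' i, dist (x (i + (N + 1))) (y (i + (N + 1))) / 2 ^ (i + (N + 1))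
      ≤ ∑' i, diam (univ : Set X) * (1 / 2) ^ (N + 1) * (1 / 2) ^ i := by
    refine Summable.tsum_le_tsum (fun i => ?_)
      ((summable_nat_add_iff (f := fun i => dist (x i) (y i) / 2 ^ i) (N + 1)).mpr hs)
      (summable_geometric_two.mul_left _)
    rw [mul_assoc, ← pow_add, add_comm (N + 1), one_div_pow, ← div_eq_mul_one_div]
    gcongr
    exact dist_le_diam_univ _ _
  rw [tsum_mul_left, tsum_geometric_two, pow_succ] at htail
  rw [rho, ← hs.sum_add_tsum_nat_add (N + 1), hhead, zero_add]
  linarith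

theorem shiftSensitive_of_forall_exists_lt_dist {F : X → Set X} {δ : ℝ} (hδ : 0 < δ)
    (hfar : ∀ a, ∃ c, F c = univ ∧ δ < dist a c) : ShiftSensitive F := by
  refine ⟨δ, hδ, fun x hx ε hε => ?_⟩
  obtain ⟨N, hN⟩ := exists_pow_lt_of_lt_one (div_pos hε (by positivity :
    0 < diam (univ : Set X) + 1)) (by norm_num : (1 / 2 : ℝ) < 1)
  obtain ⟨c, hc, hxc⟩ := hfar (x (N + 1))
  refine ⟨constAfter x N c, constAfter_mem_invLimit hx N hc, ?_, N + 1, by omega, ?_⟩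
  · calc rho x (constAfter x N c) ≤ diam (univ : Set X) * (1 / 2) ^ N :=
          rho_le_of_forall_le_eq fun i hi => by simp [constAfter, hi]
      _ ≤ (diam (univ : Set X) + 1) * (1 / 2) ^ N := by gcongr; linarith
      _ < ε := (lt_div_iff₀' (by positivity)).mp hN
  · have hρ := dist_le_rho (shift^[N + 1] x) (shift^[N + 1] (constAfter x N c))
    simp only [shift_iterate_apply, zero_add, constAfter, show ¬N + 1 ≤ N by omega,
      if_false] at hρ
    exact hxc.trans_le hρ

theorem shiftSensitive_of_ne {F : X → Set X} {c₁ c₂ : X} (hne : c₁ ≠ c₂)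
    (h₁ : F c₁ = univ) (h₂ : F c₂ = univ) : ShiftSensitive F := by
  refine shiftSensitive_of_forall_exists_lt_dist (δ := dist c₁ c₂ / 3)
    (by positivity [dist_pos.mpr hne]) fun a => ?_
  have htri := dist_triangle_left c₁ c₂ a
  by_cases ha : dist c₁ c₂ / 3 < dist a c₁
  · exact ⟨c₁, h₁, ha⟩
  · exact ⟨c₂, h₂, by linarith [dist_pos.mpr hne]⟩

end ShiftSensitivity

/-- the shift `σ` is sensitive on `lim← exF`. -/
theorem stmt16 : ShiftSensitive exF := by
  let half : unitInterval := ⟨1 / 2, by norm_num, by norm_num⟩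
  refine shiftSensitive_of_ne (c₁ := half) (c₂ := 1) ?_ ?_ ?_
  · exact fun h => by norm_num [half, Subtype.ext_iff] at h
  · norm_num [exF, half]
  · norm_num [exF]
end

section
/- Let X = [0,1] with the Euclidean metric and let F be the set-valued map defined by F(x) = {2x, 0} for 0 ≤ x ≤ 1/2 and F(x) = {2−2x, 0} for 1/2 < x ≤ 1. Then F is strongly Devaney chaotic: F is transitive, P(F) is dense in [0,1], and F is strongly sensitive. -/
open Set Metric

/-- The tent-like set-valued map on `[0,1]`:
`F x = {2x, 0}` for `x ≤ 1/2` and `F x = {2-2x, 0}` for `x > 1/2`. -/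
def tentSV : unitInterval → Set unitInterval := fun x =>
  {y | (y : ℝ) = 0 ∨ ((x : ℝ) ≤ 1 / 2 ∧ (y : ℝ) = 2 * x) ∨
       (1 / 2 < (x : ℝ) ∧ (y : ℝ) = 2 - 2 * x)}


/-- The tent map on ℝ. -/
noncomputable def Tm (x : ℝ) : ℝ := 1 - |2*x - 1|

lemma Tm_left {x : ℝ} (h : x ≤ 1/2) : Tm x = 2*x := by
  unfold Tm; rw [abs_of_nonpos (by linarith)]; ring

lemma Tm_right {x : ℝ} (h : 1/2 ≤ x) : Tm x = 2 - 2*x := by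
  unfold Tm; rw [abs_of_nonneg (by linarith)]; ring

lemma Tm_mem {x : ℝ} (h : x ∈ Icc (0:ℝ) 1) : Tm x ∈ Icc (0:ℝ) 1 := by
  obtain ⟨h0, h1⟩ := h
  constructor
  · unfold Tm
    have : |2*x - 1| ≤ 1 := abs_le.2 ⟨by linarith, by linarith⟩
    linarith
  · unfold Tm; have := abs_nonneg (2*x - 1); linarith

lemma Tm_cont : Continuous Tm := by
  unfold Tm; fun_prop

lemma preim (n : ℕ) : ∀ k : ℕ, k < 2^n → ∀ v ∈ Icc (0:ℝ) 1,
    ∃ u ∈ Icc ((k:ℝ)/2^n) (((k:ℝ)+1)/2^n), Tm^[n] u = v := by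
  induction n with
  | zero =>
    intro k hk v hv
    interval_cases k
    exact ⟨v, by simpa using hv, rfl⟩
  | succ n ih =>
    intro k hk v hv
    have hA : (0:ℝ) < 2^n := by positivity
    have hpow : ((2:ℝ))^(n+1) = 2^n * 2 := by rw [pow_succ]
    by_cases h : k < 2^n
    · obtain ⟨u', hu', hTu'⟩ := ih k h v hv
      have hk1 : ((k:ℝ)+1) ≤ 2^n := by
        have : (k:ℕ)+1 ≤ 2^n := h
        calc ((k:ℝ)+1) = ((k+1 : ℕ) : ℝ) := by push_cast; ring
        _ ≤ ((2^n : ℕ) : ℝ) := by exact_mod_cast this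
        _ = 2^n := by push_cast; ring
      have hu1 : u' ≤ 1 := hu'.2.trans (by rw [div_le_one hA]; linarith)
      refine ⟨u'/2, ⟨?_, ?_⟩, ?_⟩
      · rw [hpow, ← div_div]; linarith [hu'.1]
      · rw [hpow, ← div_div]; linarith [hu'.2]
      · rw [Function.iterate_succ_apply, Tm_left (by linarith)]
        rw [show 2*(u'/2) = u' by ring]; exact hTu'
    · have h2 : 2^n ≤ k := le_of_not_gt h
      have hp2 : 2^(n+1) = 2^n * 2 := by rw [pow_succ]
      have hk'lt : 2^(n+1) - 1 - k < 2^n := by omega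
      obtain ⟨u', hu', hTu'⟩ := ih (2^(n+1) - 1 - k) hk'lt v hv
      set k' : ℕ := 2^(n+1) - 1 - k with hk'def
      have hsum : (k:ℝ) + (k':ℝ) + 1 = 2^n * 2 := by
        have : k + k' + 1 = 2^(n+1) := by omega
        calc (k:ℝ) + (k':ℝ) + 1 = ((k + k' + 1 : ℕ) : ℝ) := by push_cast; ring
        _ = ((2^(n+1) : ℕ) : ℝ) := by exact_mod_cast Nat.cast_inj.mpr this
        _ = 2^n * 2 := by push_cast; rw [pow_succ]
      have hk'1 : ((k':ℝ)+1) ≤ 2^n := by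
        calc ((k':ℝ)+1) = ((k'+1 : ℕ) : ℝ) := by push_cast; ring
        _ ≤ ((2^n : ℕ) : ℝ) := by exact_mod_cast hk'lt
        _ = 2^n := by push_cast; ring
      have hu1 : u' ≤ 1 := hu'.2.trans (by rw [div_le_one hA]; linarith)
      have h1 : (k':ℝ)/2^n ≤ u' := hu'.1
      have h2' : u' ≤ ((k':ℝ)+1)/2^n := hu'.2
      have hm1 : (k':ℝ) ≤ u' * 2^n := (div_le_iff₀ hA).mp h1
      have hm2 : u' * 2^n ≤ (k':ℝ)+1 := (le_div_iff₀ hA).mp h2'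
      refine ⟨1 - u'/2, ⟨?_, ?_⟩, ?_⟩
      · rw [hpow, div_le_iff₀ (by positivity)]; nlinarith
      · rw [hpow, le_div_iff₀ (by positivity)]; nlinarith
      · rw [Function.iterate_succ_apply, Tm_right (by linarith)]
        rw [show 2 - 2*(1 - u'/2) = u' by ring]; exact hTu'

lemma dyadic {x : ℝ} (hx : x ∈ Icc (0:ℝ) 1) (n : ℕ) :
    ∃ k : ℕ, k < 2^n ∧ x ∈ Icc ((k:ℝ)/2^n) (((k:ℝ)+1)/2^n) := by
  have hA : (0:ℝ) < 2^n := by positivity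
  have h2n : 1 ≤ 2^n := Nat.one_le_two_pow
  have hx0 : 0 ≤ x * 2^n := by nlinarith [hx.1]
  have hfl : (0:ℤ) ≤ ⌊x * 2^n⌋ := Int.floor_nonneg.2 hx0
  have h0 : ((⌊x * 2^n⌋.toNat : ℕ) : ℝ) = ((⌊x * 2^n⌋ : ℤ) : ℝ) := by
    exact_mod_cast congrArg (fun z : ℤ => (z : ℝ)) (Int.toNat_of_nonneg hfl)
  refine ⟨min ⌊x * 2^n⌋.toNat (2^n - 1), by omega, ?_, ?_⟩
  · have h1 : ((min ⌊x * 2^n⌋.toNat (2^n - 1) : ℕ) : ℝ) ≤ x * 2^n := by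
      calc ((min ⌊x * 2^n⌋.toNat (2^n - 1) : ℕ) : ℝ) ≤ (⌊x * 2^n⌋.toNat : ℝ) := by
            exact_mod_cast Nat.min_le_left _ _
      _ = (⌊x * 2^n⌋ : ℝ) := h0
      _ ≤ x * 2^n := Int.floor_le _
    rw [div_le_iff₀ hA]; linarith
  · rw [le_div_iff₀ hA]
    rcases le_or_gt ((2^n - 1 : ℕ)) (⌊x * 2^n⌋.toNat) with h | h
    · rw [min_eq_right h]
      have : ((2^n - 1 : ℕ) : ℝ) = 2^n - 1 := by
        have : ((2^n - 1 : ℕ) : ℝ) = ((2^n : ℕ) : ℝ) - 1 := by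
          push_cast [Nat.cast_sub h2n]; ring
        rw [this]; push_cast; ring
      rw [this]
      nlinarith [hx.2]
    · rw [min_eq_left h.le]
      have : x * 2^n < (⌊x * 2^n⌋.toNat : ℝ) + 1 := by
        rw [h0]; exact Int.lt_floor_add_one _
      linarith

lemma dyadic_sub {k n : ℕ} (hk : k < 2^n) :
    Icc ((k:ℝ)/2^n) (((k:ℝ)+1)/2^n) ⊆ Icc (0:ℝ) 1 := by
  have hA : (0:ℝ) < 2^n := by positivity
  have hk1 : ((k:ℝ)+1) ≤ 2^n := by
    calc ((k:ℝ)+1) = ((k+1 : ℕ) : ℝ) := by push_cast; ring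
    _ ≤ ((2^n : ℕ) : ℝ) := by exact_mod_cast hk
    _ = 2^n := by push_cast; ring
  apply Icc_subset_Icc
  · positivity
  · rw [div_le_one hA]; linarith

lemma dyadic_width {k n : ℕ} {u x : ℝ} (hu : u ∈ Icc ((k:ℝ)/2^n) (((k:ℝ)+1)/2^n))
    (hx : x ∈ Icc ((k:ℝ)/2^n) (((k:ℝ)+1)/2^n)) : |u - x| ≤ (1/2)^n := by
  have hA : (0:ℝ) < 2^n := by positivity
  have : ((k:ℝ)+1)/2^n - (k:ℝ)/2^n = (1/2)^n := by
    rw [div_sub_div_same, one_div, inv_pow]; ring_nf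
  rw [abs_le]
  constructor <;> [linarith [hu.1, hx.2]; linarith [hu.2, hx.1]]

-- continuation (appended to aux for testing)
noncomputable def Tu : unitInterval → unitInterval := fun x => ⟨Tm x, Tm_mem x.2⟩

@[simp] lemma Tu_coe (x : unitInterval) : ((Tu x : unitInterval) : ℝ) = Tm (x : ℝ) := rfl

lemma Tu_iter_coe (n : ℕ) (x : unitInterval) : ((Tu^[n] x : unitInterval) : ℝ) = Tm^[n] (x : ℝ) := by
  induction n with
  | zero => rfl
  | succ n ih => rw [Function.iterate_succ_apply', Function.iterate_succ_apply', Tu_coe, ih]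

lemma Tu_zero : Tu 0 = 0 := by
  apply Subtype.ext
  simp only [Tu_coe]
  rw [show ((0 : unitInterval) : ℝ) = 0 from rfl, Tm_left (by norm_num)]
  ring

example (x y : unitInterval) : y ∈ tentSV x ↔ ((y : ℝ) = 0 ∨ ((x : ℝ) ≤ 1 / 2 ∧ (y : ℝ) = 2 * x) ∨
       (1 / 2 < (x : ℝ) ∧ (y : ℝ) = 2 - 2 * x)) := Iff.rfl

lemma tentSV_eq (x : unitInterval) : tentSV x = {0, Tu x} := by
  ext y
  have hy0 : (y = 0) ↔ ((y : ℝ) = 0) := by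
    constructor
    · rintro rfl; rfl
    · intro h; exact Subtype.ext h
  have hyT : (y = Tu x) ↔ ((y : ℝ) = Tm x) := by
    constructor
    · rintro rfl; rfl
    · intro h; exact Subtype.ext h
  simp only [Set.mem_insert_iff, Set.mem_singleton_iff]
  show ((y : ℝ) = 0 ∨ ((x : ℝ) ≤ 1 / 2 ∧ (y : ℝ) = 2 * x) ∨
       (1 / 2 < (x : ℝ) ∧ (y : ℝ) = 2 - 2 * x)) ↔ _
  by_cases h : (x : ℝ) ≤ 1/2
  · rw [Tm_left h] at hyT
    constructor
    · rintro (h0 | ⟨_, h2⟩ | ⟨hc, _⟩)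
      · exact Or.inl (hy0.2 h0)
      · exact Or.inr (hyT.2 h2)
      · linarith
    · rintro (h0 | h2)
      · exact Or.inl (hy0.1 h0)
      · exact Or.inr (Or.inl ⟨h, hyT.1 h2⟩)
  · push_neg at h
    rw [Tm_right h.le] at hyT
    constructor
    · rintro (h0 | ⟨h2, _⟩ | ⟨_, h3⟩)
      · exact Or.inl (hy0.2 h0)
      · linarith
      · exact Or.inr (hyT.2 h3)
    · rintro (h0 | h2)
      · exact Or.inl (hy0.1 h0)
      · exact Or.inr (Or.inr ⟨h, hyT.1 h2⟩)

lemma mem_tentSV_T (x : unitInterval) : Tu x ∈ tentSV x := by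
  rw [tentSV_eq]; exact Or.inr rfl

lemma tent_orbit (y : unitInterval) : IsOrbit tentSV (fun i => Tu^[i] y) := by
  intro i
  simp only
  rw [Function.iterate_succ_apply']
  exact mem_tentSV_T _

lemma svIter_eq (x : unitInterval) (n : ℕ) :
    svIter tentSV (n + 1) x = {0, Tu^[n + 1] x} := by
  induction n with
  | zero =>
    show ⋃ y ∈ svIter tentSV 0 x, tentSV y = _
    show ⋃ y ∈ ({x} : Set unitInterval), tentSV y = _
    rw [Set.biUnion_singleton, tentSV_eq, Function.iterate_one]
  | succ n ih =>
    show ⋃ y ∈ svIter tentSV (n + 1) x, tentSV y = _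
    rw [ih, Set.biUnion_pair, tentSV_eq, tentSV_eq, Tu_zero,
      ← Function.iterate_succ_apply' Tu (n + 1)]
    ext z
    simp only [Set.mem_union, Set.mem_insert_iff, Set.mem_singleton_iff]
    tauto


lemma unit_dist (a b : unitInterval) : dist a b = |(a:ℝ) - (b:ℝ)| := by
  rw [Subtype.dist_eq, Real.dist_eq]

lemma choose_n (ε : ℝ) (hε : 0 < ε) : ∃ n : ℕ, 1 ≤ n ∧ ((1:ℝ)/2)^n < ε := by
  obtain ⟨n0, hn0⟩ := exists_pow_lt_of_lt_one hε (by norm_num : (1:ℝ)/2 < 1)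
  exact ⟨n0 + 1, Nat.le_add_left _ _,
    lt_of_le_of_lt (pow_le_pow_of_le_one (by norm_num) (by norm_num) (Nat.le_succ n0)) hn0⟩

/-- `tentSV` is strongly Devaney chaotic: transitive, `P(F)` dense
in `[0,1]`, and strongly sensitive. -/
theorem stmt19 : SVTransitive tentSV ∧ Dense (periodicPts tentSV) ∧
    StronglySensitive tentSV := by
  refine ⟨?_, ?_, ?_⟩
  · -- transitivity
    intro U V hU hUne hV hVne
    obtain ⟨x, hxU⟩ := hUne
    obtain ⟨v, hvV⟩ := hVne
    obtain ⟨ε, hε, hball⟩ := Metric.isOpen_iff.1 hU x hxU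
    obtain ⟨n, hn1, hpow⟩ := choose_n ε hε
    obtain ⟨k, hk, hxk⟩ := dyadic x.2 n
    obtain ⟨u, huk, hTu⟩ := preim n k hk (v : ℝ) v.2
    set y : unitInterval := ⟨u, dyadic_sub hk huk⟩ with hy
    refine ⟨n, hn1, fun i => Tu^[i] y, tent_orbit y, ?_, ?_⟩
    · apply hball
      rw [Metric.mem_ball]
      show dist y x < ε
      rw [unit_dist]
      exact lt_of_le_of_lt (dyadic_width huk hxk) hpow
    · have : (Tu^[n] y : unitInterval) = v := by
        apply Subtype.ext
        rw [Tu_iter_coe]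
        exact hTu
      simpa [this] using hvV
  · -- dense periodic points
    rw [Metric.dense_iff]
    intro x ε hε
    obtain ⟨n, hn1, hpow⟩ := choose_n ε hε
    obtain ⟨k, hk, hxk⟩ := dyadic x.2 n
    obtain ⟨u0, hu0, hT0⟩ := preim n k hk 0 (by norm_num)
    obtain ⟨u1, hu1, hT1⟩ := preim n k hk 1 (by norm_num)
    have hc : ContinuousOn (fun t => Tm^[n] t - t) (Set.uIcc u0 u1) :=
      ((Tm_cont.iterate n).sub continuous_id).continuousOn
    have hmem : (0:ℝ) ∈ Set.uIcc ((fun t => Tm^[n] t - t) u0) ((fun t => Tm^[n] t - t) u1) := by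
      simp only [hT0, hT1]
      apply Set.mem_uIcc.2
      left
      refine ⟨by linarith [(dyadic_sub hk hu0).1], by linarith [(dyadic_sub hk hu1).2]⟩
    obtain ⟨p, hpI, hfp⟩ := intermediate_value_uIcc hc hmem
    have hpK : p ∈ Icc ((k:ℝ)/2^n) (((k:ℝ)+1)/2^n) := Set.uIcc_subset_Icc hu0 hu1 hpI
    have hfix : Tm^[n] p = p := by linarith [sub_eq_zero.1 hfp]
    set P : unitInterval := ⟨p, dyadic_sub hk hpK⟩ with hP
    have hTuP : Tu^[n] P = P := by
      apply Subtype.ext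
      rw [Tu_iter_coe]
      exact hfix
    refine ⟨P, ?_, ?_⟩
    · rw [Metric.mem_ball, unit_dist]
      exact lt_of_le_of_lt (dyadic_width hpK hxk) hpow
    · exact ⟨fun i => Tu^[i] P, rfl, tent_orbit P, n, hn1, fun i => by
        simp only
        rw [Function.iterate_add_apply, hTuP]⟩
  · -- strong sensitivity
    refine ⟨1/5, by norm_num, ?_⟩
    intro x ε hε
    obtain ⟨n, hn1, hpow⟩ := choose_n ε hε
    set c : unitInterval := Tu^[n] x with hcdef
    set v : ℝ := if (c : ℝ) ≤ 1/2 then 1 else 1/4 with hvdef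
    have hv01 : v ∈ Icc (0:ℝ) 1 := by
      rw [hvdef]; split <;> norm_num
    obtain ⟨k, hk, hxk⟩ := dyadic x.2 n
    obtain ⟨u, huk, hTu⟩ := preim n k hk v hv01
    set y : unitInterval := ⟨u, dyadic_sub hk huk⟩ with hy
    refine ⟨y, ?_, fun i => Tu^[i] y, rfl, tent_orbit y, n, hn1, ?_⟩
    · rw [unit_dist]
      rw [abs_sub_comm]
      exact lt_of_le_of_lt (dyadic_width huk hxk) hpow
    · obtain ⟨m, rfl⟩ : ∃ m, n = m + 1 := ⟨n - 1, by omega⟩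
      rw [svIter_eq]
      have hon : ((Tu^[m+1] y : unitInterval) : ℝ) = v := by
        rw [Tu_iter_coe]; exact hTu
      have hge : ¬ infDist ((fun i => Tu^[i] y) (m+1)) ({0, Tu^[m+1] x} : Set unitInterval) < 1/4 := by
        have hne : ({0, Tu^[m+1] x} : Set unitInterval).Nonempty := ⟨0, Or.inl rfl⟩
        rw [Metric.infDist_lt_iff hne]
        rintro ⟨z, hz, hdz⟩
        rcases hz with rfl | hz
        · rw [unit_dist] at hdz
          simp only at hdz
          rw [hon, show ((0:unitInterval):ℝ) = 0 from rfl] at hdz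
          rw [hvdef] at hdz
          split at hdz <;> rw [abs_of_nonneg (by norm_num)] at hdz <;> norm_num at hdz
        · rw [Set.mem_singleton_iff] at hz
          subst hz
          rw [unit_dist] at hdz
          simp only at hdz
          rw [hon, ← hcdef] at hdz
          rw [hvdef] at hdz
          by_cases hcle : (c : ℝ) ≤ 1/2
          · rw [if_pos hcle, abs_of_nonneg (by linarith)] at hdz
            linarith
          · push_neg at hcle
            rw [if_neg (not_le.2 hcle), abs_of_nonpos (by linarith), neg_sub] at hdz
            linarith
      have := le_of_not_gt hge
      simp only at this ⊢
      linarith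
end
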